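/- Suppose three positive numbers a = Γ(c₂,c₃), b = Γ(c₁,c₃), c = Γ(c₁,c₂) satisfy the strict triangle inequalities (each is less than the sum of the other two). Then there exist angles α₁, α₂, α₃ ∈ (0, π) with α₁ + α₂ + α₃ = 2π such that sin α₁ / a = sin α₂ / b = sin α₃ / c, and these angles are unique. -/
import Mathlib


open Real

lemma trig_id (x y : ℝ) : Real.sin x ^ 2 + Real.sin y ^ 2 - Real.sin (x+y) ^ 2 =
    -2 * Real.sin x * Real.sin y * Real.cos (x+y) := by
  rw [Real.sin_add, Real.cos_add]
  linear_combination (-(Real.sin x ^ 2)) * Real.sin_sq_add_cos_sq y +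
    (-(Real.sin y ^ 2)) * Real.sin_sq_add_cos_sq x


/-- for surface tensions `a, b, c > 0` satisfying the strict triangle
inequalities, there exist unique angles `α₁, α₂, α₃ ∈ (0, π)` summing to `2π`
such that `sin α₁ / a = sin α₂ / b = sin α₃ / c`. -/
theorem stmt3 (a b c : ℝ) (ha : 0 < a) (hb : 0 < b) (hc : 0 < c)
    (hab : a < b + c) (hbc : b < a + c) (hca : c < a + b) :
    ∃! α : ℝ × ℝ × ℝ,
      (α.1 ∈ Set.Ioo 0 π ∧ α.2.1 ∈ Set.Ioo 0 π ∧ α.2.2 ∈ Set.Ioo 0 π) ∧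
      α.1 + α.2.1 + α.2.2 = 2 * π ∧
      Real.sin α.1 / a = Real.sin α.2.1 / b ∧
      Real.sin α.2.1 / b = Real.sin α.2.2 / c := by
  set cA : ℝ := (b^2 + c^2 - a^2) / (2*b*c) with hcA
  set cB : ℝ := (a^2 + c^2 - b^2) / (2*a*c) with hcB
  have hbc0 : (0:ℝ) < 2*b*c := by positivity
  have hac0 : (0:ℝ) < 2*a*c := by positivity
  have hcA1 : cA < 1 := by
    rw [hcA, div_lt_one hbc0]; nlinarith [mul_pos (sub_pos.mpr hbc) (sub_pos.mpr hca)]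
  have hcA1' : -1 < cA := by
    rw [hcA, lt_div_iff₀ hbc0]
    nlinarith [mul_pos (sub_pos.mpr hab) (by linarith : (0:ℝ) < a + b + c)]
  have hcB1 : cB < 1 := by
    rw [hcB, div_lt_one hac0]; nlinarith [mul_pos (sub_pos.mpr hab) (sub_pos.mpr hca)]
  have hcB1' : -1 < cB := by
    rw [hcB, lt_div_iff₀ hac0]
    nlinarith [mul_pos (sub_pos.mpr hbc) (by linarith : (0:ℝ) < a + b + c)]
  set A : ℝ := Real.arccos cA with hA
  set B : ℝ := Real.arccos cB with hB
  have hA0 : 0 < A := Real.arccos_pos.mpr hcA1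
  have hAπ : A < π := (Real.arccos_le_pi cA).lt_of_ne
    (fun h => absurd (Real.arccos_eq_pi.mp h) (by linarith))
  have hB0 : 0 < B := Real.arccos_pos.mpr hcB1
  have hBπ : B < π := (Real.arccos_le_pi cB).lt_of_ne
    (fun h => absurd (Real.arccos_eq_pi.mp h) (by linarith))
  have hcosA : Real.cos A = cA := Real.cos_arccos hcA1'.le hcA1.le
  have hcosB : Real.cos B = cB := Real.cos_arccos hcB1'.le hcB1.le
  have hsinA : Real.sin A = Real.sqrt (1 - cA^2) := Real.sin_arccos cA
  have hsinB : Real.sin B = Real.sqrt (1 - cB^2) := Real.sin_arccos cB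
  have hsinA0 : 0 < Real.sin A := Real.sin_pos_of_pos_of_lt_pi hA0 hAπ
  have hsinB0 : 0 < Real.sin B := Real.sin_pos_of_pos_of_lt_pi hB0 hBπ
  -- law of sines: b sin A = a sin B
  have hlaw : b * Real.sin A = a * Real.sin B := by
    rw [hsinA, hsinB, ← Real.sqrt_sq hb.le, ← Real.sqrt_sq ha.le,
      ← Real.sqrt_mul (by positivity), ← Real.sqrt_mul (by positivity)]
    congr 1
    rw [hcA, hcB]
    field_simp
    ring
  have hsum : a * Real.cos B + b * Real.cos A = c := by
    rw [hcosA, hcosB, hcA, hcB]; field_simp; ring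
  have hsinAB : a * Real.sin (A + B) = c * Real.sin A := by
    rw [Real.sin_add]
    calc a * (Real.sin A * Real.cos B + Real.cos A * Real.sin B)
        = (a * Real.cos B) * Real.sin A + Real.cos A * (a * Real.sin B) := by ring
      _ = (a * Real.cos B) * Real.sin A + Real.cos A * (b * Real.sin A) := by rw [hlaw]
      _ = (a * Real.cos B + b * Real.cos A) * Real.sin A := by ring
      _ = c * Real.sin A := by rw [hsum]
  have hsinAB0 : 0 < Real.sin (A + B) := by
    have h' : 0 < a * Real.sin (A + B) := by rw [hsinAB]; positivity
    nlinarith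
  have hABπ : A + B < π := by
    by_contra h
    push_neg at h
    have h1 : Real.sin (A + B - π) = -Real.sin (A + B) := Real.sin_sub_pi _
    have h2 : 0 ≤ Real.sin (A + B - π) :=
      Real.sin_nonneg_of_nonneg_of_le_pi (by linarith) (by linarith)
    linarith
  refine ⟨(π - A, π - B, A + B), ⟨⟨⟨show 0 < π - A by linarith, show π - A < π by linarith⟩,
    ⟨show 0 < π - B by linarith, show π - B < π by linarith⟩,
    ⟨show 0 < A + B by linarith, show A + B < π by linarith⟩⟩, by ring, ?_, ?_⟩, ?_⟩
  · rw [Real.sin_pi_sub, Real.sin_pi_sub, div_eq_div_iff ha.ne' hb.ne']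
    linarith
  · rw [Real.sin_pi_sub, div_eq_div_iff hb.ne' hc.ne']
    have key : a * (Real.sin B * c) = a * (Real.sin (A + B) * b) := by
      linear_combination (-c) * hlaw + (-b) * hsinAB
    exact mul_left_cancel₀ ha.ne' key
  · rintro ⟨β₁, β₂, β₃⟩ ⟨⟨h1, h2, h3⟩, hsumβ, r1, r2⟩
    simp only [Set.mem_Ioo] at h1 h2 h3
    have s1 : 0 < Real.sin β₁ := Real.sin_pos_of_pos_of_lt_pi h1.1 h1.2
    have s2 : 0 < Real.sin β₂ := Real.sin_pos_of_pos_of_lt_pi h2.1 h2.2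
    have s3 : 0 < Real.sin β₃ := Real.sin_pos_of_pos_of_lt_pi h3.1 h3.2
    rw [div_eq_div_iff ha.ne' hb.ne'] at r1
    rw [div_eq_div_iff hb.ne' hc.ne'] at r2
    -- r1 : sin β₁ * b = sin β₂ * a ; r2 : sin β₂ * c = sin β₃ * b
    have e3 : Real.sin β₁ * c = Real.sin β₃ * a := by
      have : b * (Real.sin β₁ * c) = b * (Real.sin β₃ * a) := by
        linear_combination c * r1 + a * r2
      exact mul_left_cancel₀ hb.ne' this
    have hs2π : Real.sin (2*π - β₁) = -Real.sin β₁ := by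
      rw [Real.sin_sub, Real.sin_two_pi, Real.cos_two_pi]; ring
    have hc2π : Real.cos (2*π - β₁) = Real.cos β₁ := by
      rw [Real.cos_sub, Real.sin_two_pi, Real.cos_two_pi]; ring
    have hs2π' : Real.sin (2*π - β₂) = -Real.sin β₂ := by
      rw [Real.sin_sub, Real.sin_two_pi, Real.cos_two_pi]; ring
    have hc2π' : Real.cos (2*π - β₂) = Real.cos β₂ := by
      rw [Real.cos_sub, Real.sin_two_pi, Real.cos_two_pi]; ring
    have H1 := trig_id β₂ β₃
    rw [(by linarith : β₂ + β₃ = 2*π - β₁), hs2π, hc2π] at H1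
    have H2 := trig_id β₁ β₃
    rw [(by linarith : β₁ + β₃ = 2*π - β₂), hs2π', hc2π'] at H2
    have key1 : Real.sin β₁ ^ 2 * (Real.cos β₁ * (2*b*c)) =
        Real.sin β₁ ^ 2 * (-(b^2 + c^2 - a^2)) := by
      linear_combination a^2 * H1 + (Real.sin β₁ * b + Real.sin β₂ * a) * r1 +
        (Real.sin β₁ * c + Real.sin β₃ * a) * e3 +
        2 * Real.cos β₁ * (Real.sin β₃ * a * r1 + Real.sin β₁ * b * e3)
    have key2 : Real.sin β₂ ^ 2 * (Real.cos β₂ * (2*a*c)) =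
        Real.sin β₂ ^ 2 * (-(a^2 + c^2 - b^2)) := by
      linear_combination b^2 * H2 + (-(Real.sin β₂ * a + Real.sin β₁ * b)) * r1 +
        (Real.sin β₂ * c + Real.sin β₃ * b) * r2 +
        2 * Real.cos β₂ * ((-(Real.sin β₃ * b)) * r1 + Real.sin β₂ * a * r2)
    have hcb1 : Real.cos β₁ = -cA := by
      have := mul_left_cancel₀ (pow_ne_zero 2 s1.ne') key1
      rw [hcA]
      field_simp
      linarith
    have hcb2 : Real.cos β₂ = -cB := by
      have := mul_left_cancel₀ (pow_ne_zero 2 s2.ne') key2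
      rw [hcB]
      field_simp
      linarith
    have hβ1 : β₁ = π - A := by
      apply Real.injOn_cos ⟨h1.1.le, h1.2.le⟩ ⟨by linarith, by linarith⟩
      rw [hcb1, Real.cos_pi_sub, hcosA]
    have hβ2 : β₂ = π - B := by
      apply Real.injOn_cos ⟨h2.1.le, h2.2.le⟩ ⟨by linarith, by linarith⟩
      rw [hcb2, Real.cos_pi_sub, hcosB]
    have hβ3 : β₃ = A + B := by
      simp only at hsumβ
      linarith
    exact Prod.ext hβ1 (Prod.ext hβ2 hβ3)
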